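/- arXiv:2402.02312 — 3 statements merged into one kernel-verified Lean document; each statement's English description precedes it below -/
import Mathlib

section
/- Let G be a finite group, p a prime with p^e the exact power of p dividing |G|, and let g₁, g₂ ∈ G. If χ(g₁) ≡ χ(g₂) (mod p^(e+1)) for every integer-valued character χ of G induced from the trivial character of a cyclic subgroup, then g₂ is conjugate in G to an element of the cyclic subgroup generated by g₁ but not conjugate to any element of ⟨g₁^p⟩ when p divides the order of g₁. -/
/-!
Let `C = ⟨g₁⟩` have order `n`, and for `d ∣ n` let `C_d = ⟨g₁^(n/d)⟩` be its subgroup of order `d`.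
Then `d · Ind_{C_d}^G 1 (g)` counts the `k ∈ G` for which `k g k⁻¹` lies in `C` and has order
dividing `d`, so Möbius inversion turns `∑_{d ∣ n} μ(n/d) · d · Ind_{C_d}^G 1 (g)` into the number
of `k` for which `k g k⁻¹` generates `C`. For `g = g₁` this number is `|N_G(C)|`, which divides
`|G|` and hence is not divisible by `p^(e+1)`. The congruences therefore make it nonzero for
`g = g₂`: some conjugate of `g₂` generates `C`. That conjugate has order `n`, while the elements
of `⟨g₁^p⟩` have order dividing `n/p`.
-/

/-- The value at `x` of the character of `G` induced from the trivial character of a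
subgroup `H`, computed as `|{k ∈ G : k x k⁻¹ ∈ H}| / |H|` (the division is exact). -/
noncomputable def indTrivVal {G : Type*} [Group G] (H : Subgroup G) (x : G) : ℕ :=
  Nat.card {k : G // k * x * k⁻¹ ∈ H} / Nat.card H

open Finset Subgroup ArithmeticFunction
open scoped ArithmeticFunction.Moebius

theorem sum_moebius_mul_card_filter_dvd {α : Type*} (s : Finset α) (o : α → ℕ) {n : ℕ}
    (hn : 0 < n) :
    ∑ d ∈ n.divisors, (μ (n / d) : ℤ) * #{a ∈ s | o a ∣ d} = #{a ∈ s | o a = n} := by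
  have hfiber : ∀ m > 0, ∑ d ∈ m.divisors, (#{a ∈ s | o a = d} : ℤ) = #{a ∈ s | o a ∣ m} := by
    intro m hm
    rw [card_eq_sum_card_fiberwise (f := o) (t := m.divisors) fun a ha =>
      Nat.mem_divisors.mpr ⟨(mem_filter.mp ha).2, hm.ne'⟩]
    push_cast
    refine sum_congr rfl fun d hd => ?_
    rw [filter_filter]
    congr 2
    exact filter_congr fun a _ =>
      (and_iff_right_of_imp fun h => h ▸ Nat.dvd_of_mem_divisors hd).symm
  rw [← sum_eq_iff_sum_mul_moebius_eq.mp hfiber n hn]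
  exact (Nat.sum_divisorsAntidiagonal' fun a b => (μ a : ℤ) * #{x ∈ s | o x ∣ b}).symm

section

variable {G : Type*} [Group G]

theorem IsConj.orderOf_eq {a b : G} (h : IsConj a b) : orderOf a = orderOf b :=
  let ⟨c, hc⟩ := h
  hc.orderOf_eq (c : G)

theorem Subgroup.zpowers_eq_zpowers_iff_mem_and_orderOf_eq [Finite G] {x g : G} :
    zpowers x = zpowers g ↔ x ∈ zpowers g ∧ orderOf x = orderOf g := by
  refine ⟨fun h => ⟨h ▸ mem_zpowers x, by rw [← Nat.card_zpowers, h, Nat.card_zpowers]⟩,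
    fun ⟨hx, hord⟩ => eq_of_le_of_card_ge (zpowers_le.mpr hx) ?_⟩
  rw [Nat.card_zpowers, Nat.card_zpowers, hord]

theorem mem_zpowers_pow_orderOf_div_iff {g : G} {d : ℕ} (hg : orderOf g ≠ 0)
    (hd : d ∣ orderOf g) {x : G} :
    x ∈ zpowers (g ^ (orderOf g / d)) ↔ x ∈ zpowers g ∧ orderOf x ∣ d := by
  constructor
  · intro hx
    refine ⟨zpowers_le.mpr (pow_mem (mem_zpowers g) _) hx, ?_⟩
    simpa [orderOf_pow_orderOf_div hg hd] using orderOf_dvd_of_mem_zpowers hx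
  · rintro ⟨⟨i, rfl⟩, hi⟩
    have hdiv : ((orderOf g / d : ℕ) : ℤ) ∣ i := by
      have h : (orderOf g : ℤ) ∣ i * d := orderOf_dvd_iff_zpow_eq_one.mpr <| by
        rw [zpow_mul, zpow_natCast, orderOf_dvd_iff_pow_eq_one.mp hi]
      rw [← Nat.div_mul_cancel hd, Nat.cast_mul] at h
      exact (mul_dvd_mul_iff_right (by exact_mod_cast ne_zero_of_dvd_ne_zero hg hd)).mp h
    obtain ⟨j, rfl⟩ := hdiv
    exact ⟨j, by simp only [zpow_mul, zpow_natCast]⟩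

theorem Subgroup.card_normalizer_zpowers (g : G) :
    Nat.card (normalizer (zpowers g : Set G)) =
      Nat.card {k : G // zpowers (k * g * k⁻¹) = zpowers g} := by
  refine Nat.card_congr (Equiv.subtypeEquivRight fun k => ?_)
  rw [mem_normalizer_iff_map_conj_eq, MonoidHom.map_zpowers]
  rfl

theorem Subgroup.card_dvd_card_conj_mem (H : Subgroup G) (g : G) :
    Nat.card H ∣ Nat.card {k : G // k * g * k⁻¹ ∈ H} := by
  set S : Set G := {k | k⁻¹ * g * k ∈ H}
  -- `S` is a union of left cosets of `H`.
  have hS : (QuotientGroup.mk : G → G ⧸ H) ⁻¹' (QuotientGroup.mk '' S) = S := by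
    refine (Set.subset_preimage_image _ _).antisymm' ?_
    rintro k ⟨l, hl, hlk⟩
    have hlk : l⁻¹ * k ∈ H := QuotientGroup.eq.mp hlk
    have : k⁻¹ * g * k = (l⁻¹ * k)⁻¹ * (l⁻¹ * g * l) * (l⁻¹ * k) := by group
    show k⁻¹ * g * k ∈ H
    rw [this]
    exact H.mul_mem (H.mul_mem (H.inv_mem hlk) hl) hlk
  have e : {k : G // k * g * k⁻¹ ∈ H} ≃ S := (Equiv.inv G).subtypeEquiv fun k => by simp [S]
  rw [Nat.card_congr e, ← hS, QuotientGroup.card_preimage_mk]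
  exact dvd_mul_right _ _

theorem card_mul_indTrivVal (H : Subgroup G) (g : G) :
    Nat.card H * indTrivVal H g = Nat.card {k : G // k * g * k⁻¹ ∈ H} :=
  Nat.mul_div_cancel' (H.card_dvd_card_conj_mem g)

theorem mul_indTrivVal_zpowers_pow [Finite G] (g₁ g : G) {d : ℕ} (hd : d ∣ orderOf g₁) :
    d * indTrivVal (zpowers (g₁ ^ (orderOf g₁ / d))) g =
      Nat.card {k : G // k * g * k⁻¹ ∈ zpowers g₁ ∧ orderOf (k * g * k⁻¹) ∣ d} := by
  have hg := (orderOf_pos g₁).ne'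
  calc d * _ = Nat.card (zpowers (g₁ ^ (orderOf g₁ / d))) * indTrivVal _ g := by
        rw [Nat.card_zpowers, orderOf_pow_orderOf_div hg hd]
    _ = _ := by
      rw [card_mul_indTrivVal]
      exact Nat.card_congr (Equiv.subtypeEquivRight fun k => mem_zpowers_pow_orderOf_div_iff hg hd)

theorem sum_moebius_mul_indTrivVal [Fintype G] (g₁ g : G) :
    ∑ d ∈ (orderOf g₁).divisors,
        (μ (orderOf g₁ / d) : ℤ) * (d * indTrivVal (zpowers (g₁ ^ (orderOf g₁ / d))) g : ℕ) =
      Nat.card {k : G // zpowers (k * g * k⁻¹) = zpowers g₁} := by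
  classical
  have hcard (P : G → Prop) [DecidablePred P] : Nat.card {k // P k} = #{k | P k} := by
    rw [Nat.card_eq_fintype_card, Fintype.card_subtype]
  set s : Finset G := {k | k * g * k⁻¹ ∈ zpowers g₁}
  calc _ = ∑ d ∈ (orderOf g₁).divisors,
          (μ (orderOf g₁ / d) : ℤ) * #{k ∈ s | orderOf (k * g * k⁻¹) ∣ d} :=
        sum_congr rfl fun d hd => by
          rw [mul_indTrivVal_zpowers_pow g₁ g (Nat.dvd_of_mem_divisors hd), hcard, filter_filter]
    _ = #{k ∈ s | orderOf (k * g * k⁻¹) = orderOf g₁} :=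
        sum_moebius_mul_card_filter_dvd s _ (orderOf_pos g₁)
    _ = _ := by
        rw [hcard, filter_filter]
        simp_rw [zpowers_eq_zpowers_iff_mem_and_orderOf_eq]

end

/-- Let `p^e` be the exact power of `p` dividing `|G|`.  If
`χ(g₁) ≡ χ(g₂) (mod p^(e+1))` for every character `χ` of `G` induced from the trivial
character of a cyclic subgroup, then `g₂` is conjugate to an element of `⟨g₁⟩`, and,
when `p` divides the order of `g₁`, `g₂` is not conjugate to any element of `⟨g₁^p⟩`. -/
theorem stmt_4 (G : Type*) [Group G] [Fintype G] (p e : ℕ) (hp : p.Prime)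
    (he : (Nat.card G).factorization p = e) (g₁ g₂ : G)
    (hcong : ∀ H : Subgroup G, IsCyclic H →
      (p : ℤ) ^ (e + 1) ∣ (indTrivVal H g₁ : ℤ) - (indTrivVal H g₂ : ℤ)) :
    (∃ x ∈ Subgroup.zpowers g₁, IsConj x g₂) ∧
    (p ∣ orderOf g₁ → ∀ x ∈ Subgroup.zpowers (g₁ ^ p), ¬ IsConj x g₂) := by
  have hdvd : (p : ℤ) ^ (e + 1) ∣ Nat.card (normalizer (zpowers g₁ : Set G)) -
      Nat.card {k : G // zpowers (k * g₂ * k⁻¹) = zpowers g₁} := by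
    rw [card_normalizer_zpowers, ← sum_moebius_mul_indTrivVal, ← sum_moebius_mul_indTrivVal,
      ← sum_sub_distrib]
    refine dvd_sum fun d _ => ?_
    rw [← mul_sub, Nat.cast_mul, Nat.cast_mul, ← mul_sub]
    exact dvd_mul_of_dvd_right (dvd_mul_of_dvd_right (hcong _ inferInstance) _) _
  have hN : ¬ p ^ (e + 1) ∣ Nat.card (normalizer (zpowers g₁ : Set G)) := fun h => by
    subst he
    exact Nat.pow_succ_factorization_not_dvd Nat.card_pos.ne' hp
      (h.trans (card_subgroup_dvd_card _))
  obtain ⟨⟨k, hk⟩⟩ : Nonempty {k : G // zpowers (k * g₂ * k⁻¹) = zpowers g₁} := by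
    refine (Nat.card_ne_zero.mp fun h0 => hN ?_).1
    rw [h0, Nat.cast_zero, sub_zero] at hdvd
    exact_mod_cast hdvd
  have hconj : IsConj (k * g₂ * k⁻¹) g₂ := isConj_iff.mpr ⟨k⁻¹, by group⟩
  obtain ⟨hmem, hord⟩ := zpowers_eq_zpowers_iff_mem_and_orderOf_eq.mp hk
  refine ⟨⟨_, hmem, hconj⟩, fun hpn x hx hxg => ?_⟩
  have hx : orderOf x ∣ orderOf g₁ / p := by
    simpa [orderOf_pow_of_dvd hp.ne_zero hpn] using orderOf_dvd_of_mem_zpowers hx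
  rw [hxg.orderOf_eq, ← hconj.orderOf_eq, hord] at hx
  exact (Nat.div_lt_self (orderOf_pos g₁) hp.one_lt).not_ge
    (Nat.le_of_dvd (Nat.div_pos (Nat.le_of_dvd (orderOf_pos g₁) hpn) hp.pos) hx)
end

section
/- Let σ, σ' ∈ S_n be permutations such that the cycle type of σ' is obtained from the cycle type of σ by replacing p^m cycles of length k with p^(m-1) cycles of length pk. Then there exist τ, ρ ∈ S_n with σ conjugate to ρ, τ commuting with ρ, τ of order a power of p, and σ' conjugate to ρ · τ^(p^(m-1)). -/
open Equiv Multiset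

/-- The full cycle type of a permutation of `Fin n`: the cycle lengths including
fixed points as cycles of length 1. -/
def fullCycleType {n : ℕ} (σ : Equiv.Perm (Fin n)) : Multiset ℕ :=
  σ.cycleType + Multiset.replicate (n - σ.cycleType.sum) 1

/-!
Put the `p^m k` points carrying the affected cycles on `ZMod (p^m k)` and keep the other cycles of
`σ` on the complement. Writing `k = p^e u` with `p ∤ u`, translation `ρ` by `p^m` has `p^m` cycles
of length `k`, translation `τ` by `u` commutes with it and has order `p^(m+e)`, and
`ρ τ^(p^(m-1))` is translation by `p^(m-1) (u + p)`. As `u + p` is prime to `p k`, this has order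
`p k`, hence `p^(m-1)` cycles of length `p k`.
-/

theorem fullCycleType_eq_parts_partition {n : ℕ} (σ : Perm (Fin n)) :
    fullCycleType σ = σ.partition.parts := by
  rw [fullCycleType, Perm.parts_partition, Perm.sum_cycleType, Fintype.card_fin]

theorem sum_fullCycleType {n : ℕ} (σ : Perm (Fin n)) : (fullCycleType σ).sum = n := by
  rw [fullCycleType_eq_parts_partition, σ.partition.parts_sum, Fintype.card_fin]

theorem filter_fullCycleType {n : ℕ} (σ : Perm (Fin n)) :
    (fullCycleType σ).filter (2 ≤ ·) = σ.cycleType := by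
  rw [fullCycleType_eq_parts_partition, Perm.filter_parts_partition_eq_cycleType]

theorem ZMod.addOrderOf_natCast_mul {n d v w : ℕ} [NeZero n] (hn : n = d * w)
    (hvw : v.Coprime w) : addOrderOf ((d * v : ℕ) : ZMod n) = w := by
  have hd : d ≠ 0 := by rintro rfl; exact NeZero.ne n (by simpa using hn)
  rw [ZMod.addOrderOf_coe _ (NeZero.ne n), hn, Nat.gcd_mul_left, hvw.symm.gcd_eq_one, mul_one,
    Nat.mul_div_cancel_left _ (Nat.pos_of_ne_zero hd)]

namespace Equiv.Perm

variable {α : Type*}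

theorem disjoint_extendDomain_ofSubtype {β : Type*} {P : α → Prop} [DecidablePred P]
    (f : β ≃ Subtype P) (g : Perm β) (χ : Perm {x // ¬P x}) :
    Disjoint (g.extendDomain f) (ofSubtype χ) := fun x => by
  by_cases hx : P x
  · exact Or.inr (ofSubtype_apply_of_not_mem χ (not_not.mpr hx))
  · exact Or.inl (extendDomain_apply_not_subtype g f hx)

variable [Fintype α] [DecidableEq α]

theorem cycleType_eq_replicate_of_pow_apply_eq_self_iff {f : Perm α} {ℓ : ℕ} (hℓ : 2 ≤ ℓ)
    (hf : ∀ x i, (f ^ i) x = x ↔ ℓ ∣ i) :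
    f.cycleType = replicate (Fintype.card α / ℓ) ℓ := by
  have hmem : ∀ n ∈ f.cycleType, n = ℓ := by
    intro n hn
    rw [cycleType_def, Multiset.mem_map] at hn
    obtain ⟨c, hc, rfl⟩ := hn
    have hcycle : c.IsCycle := (mem_cycleFactorsFinset_iff.mp hc).1
    obtain ⟨x, hx⟩ := hcycle.nonempty_support
    have hpow : ∀ i, c ^ i = 1 ↔ ℓ ∣ i := fun i => by
      rw [hcycle.pow_eq_one_iff' (mem_support.mp hx), cycle_is_cycleOf hx hc,
        cycleOf_pow_apply_self, hf]
    rw [Function.comp_apply, ← hcycle.orderOf]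
    exact Nat.dvd_antisymm (orderOf_dvd_of_pow_eq_one ((hpow ℓ).mpr dvd_rfl))
      ((hpow _).mp (pow_orderOf_eq_one c))
  have hsupport : f.support = Finset.univ :=
    Finset.eq_univ_of_forall fun x => mem_support.mpr fun hx =>
      Nat.not_dvd_of_pos_of_lt one_pos hℓ ((hf x 1).mp (by simpa using hx))
  have hsum : f.cycleType.sum = Fintype.card α := by
    rw [sum_cycleType, hsupport, Finset.card_univ]
  rw [eq_replicate_card.mpr hmem] at hsum ⊢
  rw [sum_replicate, smul_eq_mul] at hsum
  rw [← hsum, Nat.mul_div_cancel _ (by omega)]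

theorem cycleType_extendDomain_mul_ofSubtype {β : Type*} [Fintype β] [DecidableEq β]
    {P : α → Prop} [DecidablePred P] (f : β ≃ Subtype P) (g : Perm β) (χ : Perm {x // ¬P x}) :
    (g.extendDomain f * ofSubtype χ).cycleType = g.cycleType + χ.cycleType := by
  rw [(disjoint_extendDomain_ofSubtype f g χ).cycleType_mul, cycleType_extendDomain,
    cycleType_ofSubtype]

theorem exists_extension_of_commute {β : Type*} [Fintype β] [DecidableEq β] {a t : Perm β}
    (hat : Commute a t) {D : Multiset ℕ} (hD : ∀ d ∈ D, 2 ≤ d)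
    (hcard : Fintype.card β + D.sum ≤ Fintype.card α) :
    ∃ ρ τ : Perm α, Commute ρ τ ∧ orderOf τ = orderOf t ∧ ρ.cycleType = a.cycleType + D ∧
      ∀ q : ℕ, (ρ * τ ^ q).cycleType = (a * t ^ q).cycleType + D := by
  obtain ⟨e⟩ := Function.Embedding.nonempty_of_card_le (α := β) (β := α) (by omega)
  let f : β ≃ Set.range e := Equiv.ofInjective e e.injective
  obtain ⟨χ, hχ⟩ : ∃ χ : Perm {x // x ∉ Set.range e}, χ.cycleType = D := by
    refine (exists_with_cycleType_iff _).mpr ⟨?_, hD⟩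
    rw [Fintype.card_subtype_compl, Set.card_range_of_injective e.injective]
    omega
  have htχ : Commute (t.extendDomain f) (ofSubtype χ) :=
    (disjoint_extendDomain_ofSubtype f t χ).commute
  refine ⟨a.extendDomain f * ofSubtype χ, t.extendDomain f, ?_, ?_, ?_, fun q => ?_⟩
  · exact (hat.map (extendDomainHom f)).mul_left htχ.symm
  · exact orderOf_injective (extendDomainHom f) (extendDomainHom_injective f) t
  · rw [cycleType_extendDomain_mul_ofSubtype, hχ]
  · rw [mul_assoc, ← (htχ.pow_left q).eq, ← mul_assoc, ← extendDomain_pow, extendDomain_mul,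
      cycleType_extendDomain_mul_ofSubtype, hχ]

end Equiv.Perm

namespace Equiv

variable {G : Type*}

theorem pow_addRight_apply_eq_self_iff [AddGroup G] (c x : G) (i : ℕ) :
    (Equiv.addRight c ^ i) x = x ↔ addOrderOf c ∣ i := by
  rw [nsmul_addRight, coe_addRight, add_eq_left, addOrderOf_dvd_iff_nsmul_eq_zero]

theorem orderOf_addRight [AddGroup G] (c : G) :
    orderOf (Equiv.addRight c) = addOrderOf c := by
  refine Nat.dvd_antisymm (orderOf_dvd_of_pow_eq_one ?_) ?_
  · ext x
    exact (pow_addRight_apply_eq_self_iff c x _).mpr dvd_rfl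
  · exact (pow_addRight_apply_eq_self_iff c 0 _).mp (by rw [pow_orderOf_eq_one]; rfl)

theorem commute_addRight [AddCommGroup G] (a b : G) :
    Commute (Equiv.addRight a) (Equiv.addRight b) := by
  rw [Commute, SemiconjBy, ← addRight_add, ← addRight_add, add_comm]

theorem cycleType_addRight [AddGroup G] [Fintype G] [DecidableEq G] (c : G) :
    (Equiv.addRight c).cycleType =
      (replicate (Fintype.card G / addOrderOf c) (addOrderOf c)).filter (2 ≤ ·) := by
  obtain hc | hc : addOrderOf c = 1 ∨ 2 ≤ addOrderOf c := by
    have := addOrderOf_pos c; omega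
  · rw [hc, AddMonoid.addOrderOf_eq_one_iff.mp hc, addRight_zero, Perm.cycleType_one]
    exact (filter_eq_nil.mpr fun a ha => by rw [eq_of_mem_replicate ha]; omega).symm
  · rw [Perm.cycleType_eq_replicate_of_pow_apply_eq_self_iff hc (pow_addRight_apply_eq_self_iff c)]
    exact (filter_eq_self.mpr fun a ha => by rwa [eq_of_mem_replicate ha]).symm

end Equiv

theorem exists_addRight_commute_cycleType (p m k : ℕ) [hp : Fact p.Prime] [NeZero k] :
    ∃ a t : Perm (ZMod (p ^ (m + 1) * k)), Commute a t ∧ (∃ j, orderOf t = p ^ j) ∧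
      a.cycleType = (replicate (p ^ (m + 1)) k).filter (2 ≤ ·) ∧
      (a * t ^ p ^ m).cycleType = (replicate (p ^ m) (p * k)).filter (2 ≤ ·) := by
  obtain ⟨e, u, hpu, rfl⟩ := Nat.exists_eq_pow_mul_and_not_dvd (NeZero.ne k) p hp.out.ne_one
  have hcoprime : (u + p).Coprime (p * (p ^ e * u)) := by
    have hup : (u + p).Coprime p :=
      Nat.coprime_add_self_left.mpr (hp.out.coprime_iff_not_dvd.mpr hpu).symm
    have huu : (u + p).Coprime u :=
      Nat.coprime_self_add_left.mpr (hp.out.coprime_iff_not_dvd.mpr hpu)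
    exact hup.mul_right ((hup.pow_right e).mul_right huu)
  have hordA : addOrderOf ((p ^ (m + 1) : ℕ) : ZMod (p ^ (m + 1) * (p ^ e * u))) = p ^ e * u := by
    simpa using ZMod.addOrderOf_natCast_mul (n := p ^ (m + 1) * (p ^ e * u)) (v := 1) rfl
      (Nat.coprime_one_left _)
  have hordT : addOrderOf ((u : ℕ) : ZMod (p ^ (m + 1) * (p ^ e * u))) = p ^ (m + 1 + e) := by
    simpa using ZMod.addOrderOf_natCast_mul (n := p ^ (m + 1) * (p ^ e * u)) (v := 1)
      (by ring) (Nat.coprime_one_left _)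
  have hordAT : addOrderOf ((p ^ m * (u + p) : ℕ) : ZMod (p ^ (m + 1) * (p ^ e * u))) =
      p * (p ^ e * u) :=
    ZMod.addOrderOf_natCast_mul (by ring) hcoprime
  have hshift : p ^ m • ((u : ℕ) : ZMod (p ^ (m + 1) * (p ^ e * u))) +
      ((p ^ (m + 1) : ℕ) : ZMod _) = ((p ^ m * (u + p) : ℕ) : ZMod _) := by
    push_cast
    ring
  refine ⟨Equiv.addRight ((p ^ (m + 1) : ℕ) : ZMod _), Equiv.addRight ((u : ℕ) : ZMod _),
    commute_addRight _ _, ⟨m + 1 + e, by rw [orderOf_addRight, hordT]⟩, ?_, ?_⟩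
  · rw [cycleType_addRight, hordA, ZMod.card,
      Nat.mul_div_cancel _ (Nat.pos_of_ne_zero (NeZero.ne _))]
  · rw [nsmul_addRight, ← addRight_add, cycleType_addRight, hshift, hordAT, ZMod.card,
      show p ^ (m + 1) * (p ^ e * u) = p ^ m * (p * (p ^ e * u)) by ring,
      Nat.mul_div_cancel _ (Nat.pos_of_ne_zero (NeZero.ne _))]

theorem stmt_9_general (p m k n : ℕ) (hp : p.Prime) (hm : 1 ≤ m) (hk : 1 ≤ k)
    (σ σ' : Equiv.Perm (Fin n))
    (hle : Multiset.replicate (p ^ m) k ≤ fullCycleType σ)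
    (hσ' : fullCycleType σ' =
      fullCycleType σ - Multiset.replicate (p ^ m) k + Multiset.replicate (p ^ (m - 1)) (p * k)) :
    ∃ ρ τ : Equiv.Perm (Fin n), IsConj σ ρ ∧ Commute ρ τ ∧ (∃ a : ℕ, orderOf τ = p ^ a) ∧
      IsConj σ' (ρ * τ ^ (p ^ (m - 1))) := by
  have := Fact.mk hp
  have : NeZero k := ⟨by omega⟩
  obtain ⟨m, rfl⟩ : ∃ m', m = m' + 1 := ⟨m - 1, by omega⟩
  rw [Nat.add_sub_cancel] at hσ' ⊢
  set R := fullCycleType σ - replicate (p ^ (m + 1)) k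
  have hσR : fullCycleType σ = R + replicate (p ^ (m + 1)) k := (tsub_add_cancel_of_le hle).symm
  have hcard : p ^ (m + 1) * k + (R.filter (2 ≤ ·)).sum ≤ n := by
    have h := congrArg Multiset.sum hσR
    rw [sum_fullCycleType, sum_add, sum_replicate, smul_eq_mul, ← filter_add_not (2 ≤ ·) R,
      sum_add] at h
    omega
  obtain ⟨a, t, hat, ⟨j, ht⟩, ha, hat'⟩ := exists_addRight_commute_cycleType p m k
  obtain ⟨ρ, τ, hρτ, hτ, hρ, hρτq⟩ := Perm.exists_extension_of_commute (α := Fin n) hat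
    (fun d hd => (mem_filter.mp hd).2) (by rwa [ZMod.card, Fintype.card_fin])
  refine ⟨ρ, τ, ?_, hρτ, ⟨j, hτ.trans ht⟩, ?_⟩
  · rw [Perm.isConj_iff_cycleType_eq, hρ, ha, ← filter_fullCycleType, hσR, filter_add, add_comm]
  · rw [Perm.isConj_iff_cycleType_eq, hρτq, hat', ← filter_fullCycleType, hσ', filter_add,
      add_comm]

/-- If the cycle type of `σ'` is obtained from that of `σ` by replacing
`p^m` cycles of length `k` with `p^(m-1)` cycles of length `pk`, then there are
`ρ, τ ∈ S_n` with `σ` conjugate to `ρ`, `τ` commuting with `ρ`, `τ` of `p`-power order,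
and `σ'` conjugate to `ρ * τ^(p^(m-1))`. -/
theorem stmt_9 (p m k n : ℕ) (hp : p.Prime) (hm : 1 ≤ m) (hk : 1 ≤ k)
    (hn : k * p ^ m ≤ n) (σ σ' : Equiv.Perm (Fin n))
    (hle : Multiset.replicate (p ^ m) k ≤ fullCycleType σ)
    (hσ' : fullCycleType σ' =
      fullCycleType σ - Multiset.replicate (p ^ m) k + Multiset.replicate (p ^ (m - 1)) (p * k)) :
    ∃ ρ τ : Equiv.Perm (Fin n), IsConj σ ρ ∧ Commute ρ τ ∧ (∃ a : ℕ, orderOf τ = p ^ a) ∧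
      IsConj σ' (ρ * τ ^ (p ^ (m - 1))) :=
  stmt_9_general p m k n hp hm hk σ σ' hle hσ'
end

section
/- Let G be a finite group, p a prime, and suppose g, g' ∈ G are related by the equivalence relation ∼_m generated by conjugation in G and by g ∼ g·h^(p^{m-1}) whenever h commutes with g and has p-power order. Then for every virtual character χ of G with values in ℤ, χ(g) ≡ χ(g') (mod p^m). -/
/-!
Write `m = k + 1`. Both sides are ℤ-linear in `χ` and `χ` is a class function, so it suffices to
take one representation `V` with integer character and a generator step `g ∼ g * h ^ p ^ k`,
where `h` commutes with `g` and has order `p ^ c`, `k < c`. Put `f t = χ_V (g * h ^ t)`.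

For every `p ^ c`-th root of unity `η`, `(p ^ c)⁻¹ * ∑ₜ ηᵗ f t` is the trace of `ρ g` composed
with an idempotent commuting with it, hence an algebraic integer. For `η` a primitive `p ^ e`-th
root this sum is `(p ^ c)⁻¹ * ∑ᵣ S_e r ηʳ`, where `S_e r` sums `f` over a residue class mod `p ^ e`.
Since `ℤ[η]` is the ring of integers of `ℚ(η)`, the polynomial `∑ᵣ S_e r Xʳ` is divisible by the
cyclotomic polynomial `∑ᵤ X^(p^(e-1) u)` modulo `p ^ c`, i.e. `S_e` is `p ^ (e-1)`-periodic
modulo `p ^ c`. Since `S_e` is a sum of `p` translates of `S_(e+1)`, the differences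
`D_e = S_e (p ^ k) - S_e 0` satisfy `D_e ≡ p * D_(e+1)` and `D_(k+1) ≡ 0`, so
`p ^ (c-k-1) * (f (p ^ k) - f 0) ≡ 0 [ZMOD p ^ c]`.
-/

open Finset Polynomial Function IntermediateField

theorem Module.End.isIntegral_of_hasEigenvalue {K V : Type*} [Field K] [AddCommGroup V]
    [Module K V] {f : Module.End K V} (hf : IsIntegral ℤ f) {μ : K} (hμ : f.HasEigenvalue μ) :
    IsIntegral ℤ μ := by
  obtain ⟨q, hq, hfq⟩ := hf
  obtain ⟨v, hv⟩ := hμ.exists_hasEigenvector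
  refine ⟨q, hq, ?_⟩
  have := Module.End.aeval_apply_of_hasEigenvector (p := q.map (algebraMap ℤ K)) hv
  rw [aeval_map_algebraMap, aeval_def, hfq, LinearMap.zero_apply, eval_map] at this
  exact (smul_eq_zero.mp this.symm).resolve_right hv.2

theorem Module.End.isIntegral_trace {K V : Type*} [Field K] [IsAlgClosed K] [AddCommGroup V]
    [Module K V] [FiniteDimensional K V] {f : Module.End K V} (hf : IsIntegral ℤ f) :
    IsIntegral ℤ (LinearMap.trace K V f) := by
  rw [Module.End.trace_eq_sum_roots_charpoly_of_splits (IsAlgClosed.splits _)]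
  refine IsIntegral.multiset_sum fun μ hμ => isIntegral_of_hasEigenvalue hf ?_
  exact (Module.End.hasEigenvalue_iff_isRoot_charpoly f μ).mpr (isRoot_of_mem_roots hμ)

theorem isIntegral_of_pow_succ_eq_self {A : Type*} [Ring A] {x : A} {n : ℕ} (hn : n ≠ 0)
    (hx : x ^ (n + 1) = x) : IsIntegral ℤ x :=
  ⟨X ^ (n + 1) - X,
    monic_X_pow_sub (by rw [degree_X]; exact_mod_cast Nat.succ_lt_succ (Nat.pos_of_ne_zero hn)),
    by simp [hx]⟩

theorem geom_sum_mul_of_pow_eq_one {A : Type*} [Ring A] {x : A} {n : ℕ} (hx : x ^ n = 1) :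
    (∑ t ∈ range n, x ^ t) * x = ∑ t ∈ range n, x ^ t := by
  have := geom_sum_mul x n
  rwa [hx, sub_self, mul_sub, mul_one, sub_eq_zero] at this

theorem isIdempotentElem_inv_smul_geom_sum {K A : Type*} [Field K] [Ring A] [Algebra K A]
    {x : A} {n : ℕ} (hn : (n : K) ≠ 0) (hx : x ^ n = 1) :
    IsIdempotentElem ((n : K)⁻¹ • ∑ t ∈ range n, x ^ t) := by
  set s := ∑ t ∈ range n, x ^ t
  have hsx : ∀ t, s * x ^ t = s := fun t => by
    induction t with
    | zero => simp
    | succ t ih => rw [pow_succ, ← mul_assoc, ih, geom_sum_mul_of_pow_eq_one hx]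
  have hss : s * s = (n : K) • s := by
    rw [Finset.mul_sum, sum_congr rfl fun t _ => hsx t, sum_const, card_range,
      Nat.cast_smul_eq_nsmul]
  rw [IsIdempotentElem, smul_mul_smul_comm, hss, smul_smul, mul_assoc, inv_mul_cancel₀ hn,
    mul_one]

theorem FDRep.isIntegral_inv_mul_sum_character {G : Type*} [Group G] [Finite G] (V : FDRep ℂ G)
    {g h : G} (hgh : Commute g h) {n : ℕ} (hn : n ≠ 0) (hh : h ^ n = 1) {η : ℂ}
    (hη : η ^ n = 1) :
    IsIntegral ℤ ((n : ℂ)⁻¹ * ∑ t ∈ range n, η ^ t * V.character (g * h ^ t)) := by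
  set x := η • V.ρ h
  have hx : x ^ n = 1 := by rw [_root_.smul_pow, ← map_pow, hh, hη, map_one, one_smul]
  set e := (n : ℂ)⁻¹ • ∑ t ∈ range n, x ^ t
  have hge : Commute (V.ρ g) e :=
    (Commute.sum_right _ _ _ fun t _ => ((hgh.map V.ρ).smul_right η).pow_right t).smul_right _
  have hg : V.ρ g ^ (orderOf g + 1) = V.ρ g := by
    rw [← map_pow, pow_succ, pow_orderOf_eq_one, one_mul]
  have hM : (V.ρ g * e) ^ (orderOf g + 1) = V.ρ g * e := by
    rw [hge.mul_pow, hg, (isIdempotentElem_inv_smul_geom_sum (by exact_mod_cast hn) hx).pow_succ_eq]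
  have htrace : LinearMap.trace ℂ V (V.ρ g * e)
      = (n : ℂ)⁻¹ * ∑ t ∈ range n, η ^ t * V.character (g * h ^ t) := by
    have hterm : ∀ t, V.ρ g * x ^ t = η ^ t • V.ρ (g * h ^ t) := fun t => by
      rw [_root_.smul_pow, mul_smul_comm, map_mul, map_pow]
    simp only [e, mul_smul_comm, Finset.mul_sum, hterm, map_smul, map_sum, smul_eq_mul,
      FDRep.character]
  rw [← htrace]
  exact Module.End.isIntegral_trace (isIntegral_of_pow_succ_eq_self (orderOf_pos g).ne' hM)

/-- `ℤ[ζ]` is the ring of integers of `ℚ(ζ)`, so `P(ζ) ∈ p ^ c ℤ[ζ]`, which means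
`P ∈ (p ^ c, Φ_{p^e})`. -/
theorem IsPrimitiveRoot.cyclotomic_dvd_map_of_isIntegral {L : Type*} [Field L] [CharZero L]
    {p e c : ℕ} [Fact p.Prime] {ζ : L} (hζ : IsPrimitiveRoot ζ (p ^ e)) {P : ℤ[X]}
    (hP : IsIntegral ℤ (((p ^ c : ℕ) : L)⁻¹ * aeval ζ P)) :
    cyclotomic (p ^ e) (ZMod (p ^ c)) ∣ P.map (Int.castRingHom (ZMod (p ^ c))) := by
  have hpos : 0 < p ^ e := pow_pos (Fact.out : p.Prime).pos e
  have : IsCyclotomicExtension {p ^ e} ℚ ℚ⟮ζ⟯ := by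
    have := NeZero.of_pos hpos
    change IsCyclotomicExtension {p ^ e} ℚ ℚ⟮ζ⟯.toSubalgebra
    rw [adjoin_simple_toSubalgebra_of_isAlgebraic
      ((hζ.isIntegral hpos).tower_top (A := ℚ)).isAlgebraic]
    exact hζ.adjoin_isCyclotomicExtension ℚ
  set ζ' : ℚ⟮ζ⟯ := AdjoinSimple.gen ℚ ζ
  have hζ' : IsPrimitiveRoot ζ' (p ^ e) := IsPrimitiveRoot.coe_submonoidClass_iff.mp hζ
  have hx : IsIntegral ℤ (((p ^ c : ℕ) : ℚ⟮ζ⟯)⁻¹ * aeval ζ' P) := by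
    rw [← isIntegral_algebraMap_iff (algebraMap ℚ⟮ζ⟯ L).injective]
    rw [map_mul, map_inv₀, map_natCast, ← aeval_algebraMap_apply, AdjoinSimple.algebraMap_gen]
    exact hP
  obtain ⟨y, hy⟩ := (IsCyclotomicExtension.Rat.isIntegralClosure_adjoin_singleton_of_prime_pow
    hζ').isIntegral_iff.mp hx
  obtain ⟨Q, hQ⟩ : ∃ Q : ℤ[X], aeval ζ' Q = algebraMap _ ℚ⟮ζ⟯ y := by
    have hy : (y : ℚ⟮ζ⟯) ∈ (aeval ζ' : ℤ[X] →ₐ[ℤ] ℚ⟮ζ⟯).range := by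
      rw [← Algebra.adjoin_singleton_eq_range_aeval]
      exact y.2
    exact hy
  have hroot : aeval ζ' (P - C ((p ^ c : ℕ) : ℤ) * Q) = 0 := by
    have hpc : ((p ^ c : ℕ) : ℚ⟮ζ⟯) ≠ 0 :=
      Nat.cast_ne_zero.mpr (pow_pos (Fact.out : p.Prime).pos c).ne'
    rw [map_sub, map_mul, aeval_C, hQ, hy, algebraMap_int_eq, eq_intCast, Int.cast_natCast,
      mul_inv_cancel_left₀ hpc, sub_self]
  obtain ⟨R, hR⟩ := cyclotomic_eq_minpoly hζ' hpos ▸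
    minpoly.isIntegrallyClosed_dvd (hζ'.isIntegral hpos) hroot
  refine ⟨R.map (Int.castRingHom _), ?_⟩
  have := congrArg (map (Int.castRingHom (ZMod (p ^ c)))) hR
  simpa only [Polynomial.map_sub, Polynomial.map_mul, eq_intCast, Int.cast_natCast,
    Polynomial.map_natCast, map_cyclotomic, CharP.cast_eq_zero, zero_mul, sub_zero] using this

theorem Polynomial.coeff_geom_sum_X_pow_mul {R : Type*} [Semiring R] {a p : ℕ} {S : R[X]}
    (hS : S.natDegree < a) {i : ℕ} (hi : i < a * p) :
    ((∑ u ∈ range p, (X ^ a) ^ u) * S).coeff i = S.coeff (i % a) := by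
  have ha : 0 < a := by rcases Nat.eq_zero_or_pos a with rfl | h <;> simp_all
  simp only [Finset.sum_mul, finsetSum_coeff, ← pow_mul, coeff_X_pow_mul']
  rw [sum_eq_single (i / a)]
  · rw [if_pos (Nat.mul_div_le i a), ← Nat.mod_eq_sub_mul_div]
  · intro u _ hu
    split_ifs with hle
    · have hlt : u < i / a := lt_of_le_of_ne ((Nat.le_div_iff_mul_le ha).mpr (by linarith)) hu
      have : a * (u + 1) ≤ i :=
        calc a * (u + 1) ≤ a * (i / a) := Nat.mul_le_mul_left a hlt
          _ ≤ i := Nat.mul_div_le i a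
      exact coeff_eq_zero_of_natDegree_lt (by rw [Nat.mul_succ] at this; omega)
    · rfl
  · intro h
    exact absurd (mem_range.mpr ((Nat.div_lt_iff_lt_mul ha).mpr (by linarith))) h

theorem Polynomial.coeff_eq_coeff_mod_of_cyclotomic_dvd {R : Type*} [CommRing R] {p k : ℕ}
    (hp : p.Prime) {P : R[X]} (hdeg : P.natDegree < p ^ (k + 1))
    (hP : cyclotomic (p ^ (k + 1)) R ∣ P) {j : ℕ} (hj : j < p ^ (k + 1)) :
    P.coeff j = P.coeff (j % p ^ k) := by
  obtain ⟨S, rfl⟩ := hP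
  rcases eq_or_ne S 0 with rfl | hS
  · simp
  have := Polynomial.nontrivial_iff.mp (nontrivial_of_ne S 0 hS)
  have hpk : p ^ (k + 1) = p ^ k * p := pow_succ p k
  have hSdeg : S.natDegree < p ^ k := by
    rw [(cyclotomic.monic _ R).natDegree_mul' hS, natDegree_cyclotomic,
      Nat.totient_prime_pow_succ hp, Nat.mul_sub_one, ← hpk] at hdeg
    have : p ^ k ≤ p ^ (k + 1) := Nat.pow_le_pow_right hp.pos k.le_succ
    omega
  rw [cyclotomic_prime_pow_eq_geom_sum hp, hpk] at *
  have hjk : j % p ^ k < p ^ k * p :=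
    (Nat.mod_lt j (pow_pos hp.pos k)).trans_le (Nat.le_mul_of_pos_right _ hp.pos)
  rw [coeff_geom_sum_X_pow_mul hSdeg hj, coeff_geom_sum_X_pow_mul hSdeg hjk, Nat.mod_mod]

theorem IsPrimitiveRoot.modEq_of_isIntegral_sum {L : Type*} [Field L] [CharZero L]
    {p k c : ℕ} [hp : Fact p.Prime] {ζ : L} (hζ : IsPrimitiveRoot ζ (p ^ (k + 1)))
    {A : ℕ → ℤ} (hA : Periodic A (p ^ (k + 1)))
    (hint : IsIntegral ℤ (((p ^ c : ℕ) : L)⁻¹ * ∑ r ∈ range (p ^ (k + 1)), (A r : L) * ζ ^ r))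
    (r i : ℕ) : A (r + p ^ k * i) ≡ A r [ZMOD (p : ℤ) ^ c] := by
  have hpos : 0 < p ^ (k + 1) := pow_pos hp.out.pos _
  set P : ℤ[X] := ∑ r ∈ range (p ^ (k + 1)), C (A r) * X ^ r
  have hcoeff : ∀ j < p ^ (k + 1), P.coeff j = A j := fun j hj => by
    simp [P, finsetSum_coeff, hj]
  have hdeg : (P.map (Int.castRingHom (ZMod (p ^ c)))).natDegree < p ^ (k + 1) := by
    refine natDegree_map_le.trans_lt (Nat.lt_of_le_pred hpos ?_)
    exact natDegree_sum_le_of_forall_le _ _ fun r hr =>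
      (natDegree_C_mul_X_pow_le _ _).trans (Nat.le_pred_of_lt (mem_range.mp hr))
  have hdvd := hζ.cyclotomic_dvd_map_of_isIntegral (P := P) (by simpa [P] using hint)
  have hmod : ∀ j < p ^ (k + 1), A j ≡ A (j % p ^ k) [ZMOD (p : ℤ) ^ c] := fun j hj => by
    have := coeff_eq_coeff_mod_of_cyclotomic_dvd hp.out hdeg hdvd hj
    rw [coeff_map, coeff_map, hcoeff j hj, hcoeff _ ((Nat.mod_lt j (pow_pos hp.out.pos k)).trans
      (Nat.pow_lt_pow_right hp.out.one_lt k.lt_succ_self))] at this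
    simpa using (ZMod.intCast_eq_intCast_iff _ _ _).mp this
  have hall : ∀ r, A r ≡ A (r % p ^ k) [ZMOD (p : ℤ) ^ c] := fun r => by
    rw [← hA.map_mod_nat r, ← Nat.mod_mod_of_dvd r (pow_dvd_pow p k.le_succ)]
    exact hmod _ (Nat.mod_lt _ hpos)
  calc A (r + p ^ k * i) ≡ A ((r + p ^ k * i) % p ^ k) [ZMOD (p : ℤ) ^ c] := hall _
    _ = A (r % p ^ k) := by rw [Nat.add_mul_mod_self_left]
    _ ≡ A r [ZMOD (p : ℤ) ^ c] := (hall r).symm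

theorem Finset.sum_range_mul_eq_sum_sum {M : Type*} [AddCommMonoid M] (g : ℕ → M) (a b : ℕ) :
    ∑ t ∈ range (a * b), g t = ∑ r ∈ range a, ∑ w ∈ range b, g (r + a * w) := by
  induction b with
  | zero => simp
  | succ b ih =>
    rw [Nat.mul_succ, sum_range_add, ih, ← sum_add_distrib]
    exact sum_congr rfl fun r _ => by rw [sum_range_succ, add_comm r]

theorem Finset.sum_range_comp_succ_of_eq {M : Type*} [AddCancelCommMonoid M] {g : ℕ → M}
    {n : ℕ} (hg : g n = g 0) : ∑ w ∈ range n, g (w + 1) = ∑ w ∈ range n, g w := by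
  have h := (sum_range_succ' g n).symm.trans (sum_range_succ g n)
  rwa [hg, add_left_inj] at h

theorem dvd_sub_of_levelwise_modEq {p c k : ℕ} (hp : 0 < p) (hkc : k < c)
    (S : ℕ → ℕ → ℤ) (hstep : ∀ e < c, ∀ r, S e r = ∑ v ∈ range p, S (e + 1) (r + p ^ e * v))
    (hcong : ∀ e < c, ∀ r i, S (e + 1) (r + p ^ e * i) ≡ S (e + 1) r [ZMOD (p : ℤ) ^ c]) :
    (p : ℤ) ^ (k + 1) ∣ S c (p ^ k) - S c 0 := by
  set D : ℕ → ℤ := fun e => S e (p ^ k) - S e 0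
  have hD : ∀ e < c, D e ≡ p * D (e + 1) [ZMOD (p : ℤ) ^ c] := fun e he => by
    have hsum := Int.ModEq.sum (s := range p) fun v _ =>
      (hcong e he (p ^ k) v).sub (hcong e he 0 v)
    simp only [D, hstep e he (p ^ k), hstep e he 0, ← sum_sub_distrib]
    simpa [mul_sub] using hsum
  have hbase : D (k + 1) ≡ 0 [ZMOD (p : ℤ) ^ c] :=
    Int.modEq_zero_iff_dvd.mpr (by simpa using (hcong k hkc 0 1).symm.dvd)
  have hiter : ∀ i, k + 1 + i ≤ c → (p : ℤ) ^ i * D (k + 1 + i) ≡ 0 [ZMOD (p : ℤ) ^ c] := by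
    intro i
    induction i with
    | zero => intro; simpa using hbase
    | succ i ih =>
      intro hi
      calc (p : ℤ) ^ (i + 1) * D (k + 1 + (i + 1)) = p ^ i * (p * D (k + 1 + i + 1)) := by
            ring_nf
        _ ≡ p ^ i * D (k + 1 + i) [ZMOD (p : ℤ) ^ c] := (hD _ (by omega)).symm.mul_left _
        _ ≡ 0 [ZMOD (p : ℤ) ^ c] := ih (by omega)
  have hc := Int.modEq_zero_iff_dvd.mp (hiter (c - (k + 1)) (by omega))
  have hpc : (p : ℤ) ^ c = p ^ (c - (k + 1)) * p ^ (k + 1) := by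
    rw [← pow_add, Nat.sub_add_cancel hkc]
  rw [show k + 1 + (c - (k + 1)) = c by omega, hpc] at hc
  exact (mul_dvd_mul_iff_left (pow_ne_zero _ (by exact_mod_cast hp.ne'))).mp hc

theorem dvd_sub_of_isIntegral_fourier {p c k : ℕ} (hp : p.Prime) (hkc : k < c) {f : ℕ → ℤ}
    (hf : Periodic f (p ^ c))
    (hint : ∀ η : ℂ, η ^ p ^ c = 1 →
      IsIntegral ℤ (((p ^ c : ℕ) : ℂ)⁻¹ * ∑ t ∈ range (p ^ c), η ^ t * f t)) :
    (p : ℤ) ^ (k + 1) ∣ f (p ^ k) - f 0 := by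
  have := Fact.mk hp
  set S : ℕ → ℕ → ℤ := fun e r => ∑ w ∈ range (p ^ (c - e)), f (r + p ^ e * w)
  have hsplit : ∀ e ≤ c, p ^ c = p ^ e * p ^ (c - e) := fun e he => by
    rw [← pow_add, Nat.add_sub_cancel' he]
  have hS_periodic : ∀ e ≤ c, Periodic (S e) (p ^ e) := fun e he r => by
    simp only [S]
    rw [← sum_range_comp_succ_of_eq (g := fun w => f (r + p ^ e * w))
      (by simp only [← hsplit e he, mul_zero, add_zero, hf r])]
    exact sum_congr rfl fun w _ => by ring_nf
  have hS_step : ∀ e < c, ∀ r, S e r = ∑ v ∈ range p, S (e + 1) (r + p ^ e * v) := by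
    intro e he r
    simp only [S]
    rw [show c - e = (c - (e + 1)) + 1 by omega, pow_succ', sum_range_mul_eq_sum_sum]
    exact sum_congr rfl fun v _ => sum_congr rfl fun w _ => by ring_nf
  have hS_fourier : ∀ e ≤ c, ∀ η : ℂ, η ^ p ^ e = 1 →
      ∑ t ∈ range (p ^ c), η ^ t * f t = ∑ r ∈ range (p ^ e), (S e r : ℂ) * η ^ r := by
    intro e he η hη
    rw [hsplit e he, sum_range_mul_eq_sum_sum]
    refine sum_congr rfl fun r _ => ?_
    simp only [S, Int.cast_sum, sum_mul]
    exact sum_congr rfl fun w _ => by rw [pow_add, pow_mul, hη, one_pow, mul_one, mul_comm]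
  have hcong : ∀ e < c, ∀ r i, S (e + 1) (r + p ^ e * i) ≡ S (e + 1) r [ZMOD (p : ℤ) ^ c] := by
    intro e he
    have hη := Complex.isPrimitiveRoot_exp (p ^ (e + 1)) (pow_ne_zero _ hp.ne_zero)
    refine hη.modEq_of_isIntegral_sum (hS_periodic _ he) ?_
    rw [← hS_fourier _ he _ hη.pow_eq_one]
    exact hint _ (hη.pow_eq_one_iff_dvd _ |>.mpr (pow_dvd_pow p he))
  simpa [S] using dvd_sub_of_levelwise_modEq hp.pos hkc S hS_step hcong

theorem FDRep.modEq_of_character_eq_intCast {G : Type*} [Group G] [Finite G] (V : FDRep ℂ G)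
    {z : G → ℤ} (hz : ∀ x, V.character x = z x) {p c : ℕ} (hp : p.Prime) {g h : G}
    (hgh : Commute g h) (hh : orderOf h = p ^ c) (k : ℕ) :
    z g ≡ z (g * h ^ p ^ k) [ZMOD (p : ℤ) ^ (k + 1)] := by
  refine Int.modEq_iff_dvd.mpr ?_
  rcases le_or_gt c k with hck | hkc
  · have : h ^ p ^ k = 1 := orderOf_dvd_iff_pow_eq_one.mp (hh ▸ pow_dvd_pow p hck)
    simp [this]
  · have hhc : h ^ p ^ c = 1 := hh ▸ pow_orderOf_eq_one h
    simpa using dvd_sub_of_isIntegral_fourier hp hkc (f := fun t => z (g * h ^ t))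
      (fun t => by simp [pow_add, hhc]) fun η hη => by
        simpa [hz] using V.isIntegral_inv_mul_sum_character hgh (pow_ne_zero _ hp.ne_zero) hhc hη

/-- Let `G` be a finite group and `p` a prime.  Suppose `g ∼_m g'` where
`∼_m` is the equivalence relation generated by conjugation and `g ∼ g * h^(p^(m-1))`
whenever `h` commutes with `g` and has `p`-power order.  Then for every virtual character
`χ` of `G` with values in `ℤ` (an integer linear combination of characters of complex
representations whose values are rational integers), `χ g ≡ χ g' (mod p^m)`. -/
theorem stmt_14 (p m : ℕ) (hp : p.Prime) (hm : 1 ≤ m)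
    (G : Type) [Group G] [Fintype G] (g g' : G)
    (hrel : Relation.EqvGen
      (fun a b : G => IsConj a b ∨
        ∃ h : G, Commute a h ∧ (∃ c : ℕ, orderOf h = p ^ c) ∧ b = a * h ^ (p ^ (m - 1)))
      g g')
    (χ : G → ℤ) (r : ℕ) (F : Fin r → FDRep ℂ G) (c : Fin r → ℤ)
    (hint : ∀ i : Fin r, ∀ x : G, ∃ z : ℤ, (F i).character x = (z : ℂ))
    (hχ : ∀ x : G, (χ x : ℂ) = ∑ i : Fin r, (c i : ℂ) * (F i).character x) :
    (p : ℤ) ^ m ∣ χ g - χ g' := by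
  obtain ⟨k, rfl⟩ : ∃ k, m = k + 1 := ⟨m - 1, by omega⟩
  choose z hz using hint
  have hχz : ∀ x, χ x = ∑ i, c i * z i x := fun x => by
    have := hχ x
    simp only [hz] at this
    exact_mod_cast this
  have hmodEq : Relation.EqvGen (fun a b => χ a ≡ χ b [ZMOD (p : ℤ) ^ (k + 1)]) g g' := by
    refine Relation.EqvGen.mono ?_ _ _ hrel
    rintro a b (hab | ⟨h, hah, ⟨e, he⟩, rfl⟩) <;> simp only [hχz]
    · obtain ⟨u, rfl⟩ := isConj_iff.mp hab
      have hconj : ∀ i, z i (u * a * u⁻¹) = z i a := fun i => by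
        exact_mod_cast (hz i _).symm.trans (((F i).char_conj a u).trans (hz i a))
      simp only [hconj]
      rfl
    · exact Int.ModEq.sum fun i _ =>
        ((F i).modEq_of_character_eq_intCast (hz i) hp hah he k).mul_left _
  exact ((Equivalence.eqvGen_iff ⟨fun _ => .refl _, .symm, .trans⟩).mp hmodEq).symm.dvd
end
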